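/- arXiv:0805.2020 — 4 statements merged into one kernel-verified Lean document; each statement's English description precedes it below -/
import Mathlib

section
/- For 2 < p < ∞ and β := (3^p - 1)^{1/p}, the cogenerator V = [[0, -β/3],[0,1/3]] of A = [[-1,β],[0,-2]] is a contraction on ℂ² with the ℓ^p norm, while the semigroup (e^{tA})_{t≥0} is not contractive on (ℂ², ‖·‖_p). -/
open Matrix

/-! The `p`-norm of `V x` only sees `x 1`: it equals
`((β ^ p + 1) / 3 ^ p) ^ (1 / p) ‖x 1‖ = ‖x 1‖`. For the semigroup, diagonalising the
triangular generator gives `e^{tA} (β/2, 1) = (β (3/2 e^{-t} - e^{-2t}), e^{-2t})`, and the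
`p`-th power of its norm has derivative `p ((β/2) ^ p - 2)` at `t = 0`. This is positive
because `3 ^ p - 1 > 2 ^ (p + 1)` for `p > 2`, so the norm increases for small `t > 0`. -/

noncomputable def pNormFin2 (p : ℝ) (x : Fin 2 → ℂ) : ℝ :=
  (‖x 0‖ ^ p + ‖x 1‖ ^ p) ^ (1 / p)

theorem pNormFin2_ofReal (p : ℝ) {a b : ℝ} (ha : 0 ≤ a) (hb : 0 ≤ b) :
    pNormFin2 p ![(a : ℂ), (b : ℂ)] = (a ^ p + b ^ p) ^ (1 / p) := by
  simp [pNormFin2, Complex.norm_real, abs_of_nonneg ha, abs_of_nonneg hb]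

theorem pNormFin2_mulVec_le {p : ℝ} (hp : 0 < p) {c d : ℂ}
    (hcd : ‖c‖ ^ p + ‖d‖ ^ p ≤ 1) (x : Fin 2 → ℂ) :
    pNormFin2 p (!![0, c; 0, d] *ᵥ x) ≤ pNormFin2 p x := by
  have hVx : ‖(!![0, c; 0, d] *ᵥ x) 0‖ ^ p + ‖(!![0, c; 0, d] *ᵥ x) 1‖ ^ p =
      (‖c‖ ^ p + ‖d‖ ^ p) * ‖x 1‖ ^ p := by
    simp only [mulVec, dotProduct, Fin.sum_univ_two, of_apply, cons_val', cons_val_zero,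
      cons_val_one, cons_val_fin_one, zero_mul, zero_add, Complex.norm_mul, norm_nonneg,
      Real.mul_rpow]
    ring
  unfold pNormFin2
  rw [hVx]
  gcongr
  calc (‖c‖ ^ p + ‖d‖ ^ p) * ‖x 1‖ ^ p ≤ ‖x 1‖ ^ p :=
        mul_le_of_le_one_left (by positivity) hcd
    _ ≤ ‖x 0‖ ^ p + ‖x 1‖ ^ p := le_add_of_nonneg_left (by positivity)

theorem Matrix.exp_upperTriangular_fin_two {a d : ℂ} (b : ℂ) (had : a ≠ d) :
    NormedSpace.exp !![a, b; 0, d] =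
      !![Complex.exp a, b * (Complex.exp a - Complex.exp d) / (a - d); 0, Complex.exp d] := by
  have hda : d - a ≠ 0 := sub_ne_zero.mpr had.symm
  set P : Matrix (Fin 2) (Fin 2) ℂ := !![1, b / (d - a); 0, 1]
  have hPinv : P⁻¹ = !![1, -(b / (d - a)); 0, 1] :=
    inv_eq_right_inv (by simp [P, one_fin_two])
  have hP : IsUnit P := by simp [isUnit_iff_isUnit_det, P, det_fin_two_of]
  have hexp : NormedSpace.exp ![a, d] = ![Complex.exp a, Complex.exp d] := by
    ext i
    fin_cases i <;> simp [Pi.coe_exp, Complex.exp_eq_exp_ℂ]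
  have hdiag : !![a, b; 0, d] = P * diagonal ![a, d] * P⁻¹ := by
    rw [hPinv, diagonal_vec2, mul_fin_two, mul_fin_two]
    ext i j
    fin_cases i <;> fin_cases j <;> simp
    field_simp
    ring
  rw [hdiag, exp_conj P _ hP, exp_diagonal, hPinv, hexp, diagonal_vec2, mul_fin_two, mul_fin_two]
  ext i j
  fin_cases i <;> fin_cases j <;> simp
  field_simp
  ring

noncomputable def orbitFst (β t : ℝ) : ℝ := β * (3 / 2 * Real.exp (-t) - Real.exp (-(2 * t)))

theorem orbitFst_zero (β : ℝ) : orbitFst β 0 = β / 2 := by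
  simp only [orbitFst, neg_zero, mul_zero, Real.exp_zero, mul_one]
  ring

theorem orbitFst_nonneg {β t : ℝ} (hβ : 0 ≤ β) (ht : 0 ≤ t) : 0 ≤ orbitFst β t := by
  have hle : Real.exp (-(2 * t)) ≤ Real.exp (-t) := Real.exp_le_exp.mpr (by linarith)
  exact mul_nonneg hβ (by linarith [Real.exp_pos (-t)])

theorem exp_smul_generator_mulVec {β t : ℝ} (ht : t ≠ 0) :
    NormedSpace.exp (t • !![(-1 : ℂ), (β : ℂ); 0, -2]) *ᵥ
        ![((β / 2 : ℝ) : ℂ), ((1 : ℝ) : ℂ)] =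
      ![(orbitFst β t : ℂ), (Real.exp (-(2 * t)) : ℂ)] := by
  have hsmul : t • !![(-1 : ℂ), (β : ℂ); 0, -2] =
      !![((-t : ℝ) : ℂ), t * β; 0, ((-(2 * t) : ℝ) : ℂ)] := by
    ext i j
    fin_cases i <;> fin_cases j <;> simp [mul_comm]
  have hne : ((-t : ℝ) : ℂ) ≠ ((-(2 * t) : ℝ) : ℂ) := by
    rw [Ne, Complex.ofReal_inj]
    intro h
    exact ht (by linarith)
  have htC : (t : ℂ) ≠ 0 := Complex.ofReal_ne_zero.mpr ht
  rw [hsmul, exp_upperTriangular_fin_two _ hne]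
  ext i
  fin_cases i <;> simp [mulVec, dotProduct, Fin.sum_univ_two, orbitFst]
  field_simp
  ring

theorem hasDerivAt_orbit_rpow {β : ℝ} (hβ : 0 < β) (p : ℝ) :
    HasDerivAt (fun t => orbitFst β t ^ p + Real.exp (-(2 * t)) ^ p)
      (p * ((β / 2) ^ p - 2)) 0 := by
  have he1 : HasDerivAt (fun t : ℝ => Real.exp (-t)) (-1) 0 := by
    simpa using (hasDerivAt_neg (0 : ℝ)).exp
  have he2 : HasDerivAt (fun t : ℝ => Real.exp (-(2 * t))) (-2) 0 := by
    simpa using ((hasDerivAt_id (0 : ℝ)).const_mul (2 : ℝ)).neg.exp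
  have hu : HasDerivAt (orbitFst β) (β / 2) 0 :=
    (((he1.const_mul (3 / 2 : ℝ)).sub he2).const_mul β).congr_deriv (by ring)
  have hu0 := orbitFst_zero β
  have hup := hu.rpow_const (p := p) (Or.inl (by rw [hu0]; positivity))
  have hvp := he2.rpow_const (p := p) (Or.inl (by simp))
  rw [hu0] at hup
  refine (hup.add hvp).congr_deriv ?_
  have hβ2 : (β / 2) ^ (p - 1) * (β / 2) = (β / 2) ^ p := by
    rw [← Real.rpow_add_one (by positivity) (p - 1), sub_add_cancel]
  simp only [Real.one_rpow, mul_one, neg_mul, mul_zero, neg_zero, Real.exp_zero]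
  linear_combination p * hβ2

theorem exists_lt_of_hasDerivAt_pos {f : ℝ → ℝ} {c x : ℝ} (hf : HasDerivAt f c x)
    (hc : 0 < c) : ∃ t, x < t ∧ f x < f t := by
  obtain ⟨s, hslope, hs⟩ :=
    ((hf.tendsto_slope_zero_right.eventually (lt_mem_nhds hc)).and self_mem_nhdsWithin).exists
  have hs : 0 < s := hs
  refine ⟨x + s, by linarith, ?_⟩
  rw [smul_eq_mul, mul_pos_iff_of_pos_left (inv_pos.mpr hs)] at hslope
  linarith

theorem two_mul_two_rpow_lt {p : ℝ} (hp : 2 < p) : 2 * 2 ^ p < (3 : ℝ) ^ p - 1 := by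
  have h32 : (3 / 2 : ℝ) ^ (2 : ℝ) < (3 / 2) ^ p :=
    Real.rpow_lt_rpow_of_exponent_lt (by norm_num) hp
  have h2 : (2 : ℝ) ^ (2 : ℝ) < 2 ^ p := Real.rpow_lt_rpow_of_exponent_lt (by norm_num) hp
  have h3 : (3 : ℝ) ^ p = (3 / 2) ^ p * 2 ^ p := by
    rw [← Real.mul_rpow (by norm_num) (by norm_num)]
    norm_num
  norm_num at h32 h2
  nlinarith

/-- For `2 < p < ∞` and `β := (3^p - 1)^{1/p}`, the cogenerator `V = [[0, -β/3],[0, 1/3]]`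
of `A = [[-1, β],[0,-2]]` is a contraction on `(ℂ², ‖·‖_p)`, while the semigroup
`(e^{tA})_{t ≥ 0}` is not contractive on `(ℂ², ‖·‖_p)`. -/
theorem stmt_11 (p : ℝ) (hp : 2 < p) (β : ℝ) (hβ : β = (3 ^ p - 1) ^ (1 / p))
    (pnorm : (Fin 2 → ℂ) → ℝ)
    (hpnorm : ∀ x : Fin 2 → ℂ, pnorm x = (‖x 0‖ ^ p + ‖x 1‖ ^ p) ^ (1 / p)) :
    (∀ x : Fin 2 → ℂ, pnorm ((!![(0 : ℂ), -(β : ℂ) / 3; 0, 1 / 3]).mulVec x) ≤ pnorm x) ∧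
      ∃ t : ℝ, 0 < t ∧ ∃ x : Fin 2 → ℂ,
        pnorm x < pnorm ((NormedSpace.exp (t • !![(-1 : ℂ), (β : ℂ); 0, -2])).mulVec x) := by
  obtain rfl : pnorm = pNormFin2 p := funext hpnorm
  have hp0 : 0 < p := by linarith
  have h3p := two_mul_two_rpow_lt hp
  have h3p0 : 0 < (3 : ℝ) ^ p - 1 := by linarith [Real.rpow_pos_of_pos two_pos p]
  have hβp : β ^ p = 3 ^ p - 1 := by rw [hβ, one_div, Real.rpow_inv_rpow h3p0.le hp0.ne']
  have hβ0 : 0 < β := hβ ▸ Real.rpow_pos_of_pos h3p0 _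
  refine ⟨pNormFin2_mulVec_le hp0 ?_, ?_⟩
  · have hV : ‖-(β : ℂ) / 3‖ ^ p + ‖(1 / 3 : ℂ)‖ ^ p = (β ^ p + 1) / 3 ^ p := by
      simp [Complex.norm_real, abs_of_pos hβ0, Real.div_rpow, Real.inv_rpow, hβ0.le, add_div]
    rw [hV, hβp, sub_add_cancel, div_self (by positivity)]
  · have hβ2 : 2 < (β / 2) ^ p := by
      rw [Real.div_rpow hβ0.le zero_le_two, hβp, lt_div_iff₀ (by positivity)]
      linarith
    obtain ⟨t, ht, hlt⟩ :=
      exists_lt_of_hasDerivAt_pos (hasDerivAt_orbit_rpow hβ0 p) (mul_pos hp0 (by linarith))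
    refine ⟨t, ht, ![((β / 2 : ℝ) : ℂ), ((1 : ℝ) : ℂ)], ?_⟩
    rw [exp_smul_generator_mulVec ht.ne', pNormFin2_ofReal p (by positivity) zero_le_one,
      pNormFin2_ofReal p (orbitFst_nonneg hβ0.le ht.le) (Real.exp_pos _).le]
    refine Real.rpow_lt_rpow (by positivity) ?_ (by positivity)
    simpa [orbitFst_zero] using hlt
end

section
/- Let A = [[-1, β],[0,-2]] with 0 < β. Then A^{-1} = [[-1, -β/2],[0,-1/2]], and e^{tA^{-1}} = [[e^{-t}, β(e^{-t} - e^{-t/2})],[0, e^{-t/2}]]. The semigroup (e^{tA^{-1}})_{t≥0} is contractive on (ℂ², ‖·‖_∞) if and only if β ≤ 2. -/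
/-!
The exponential is computed by diagonalising `t A⁻¹ = U diag(-t, -t/2) U⁻¹` with a unipotent
`U`. On `(ℂ², ‖·‖_∞)` the operator norm of a matrix is its largest absolute row sum, so with
`u = e^{-t/2} ∈ (0, 1]` contractivity says `u² + β (u - u²) ≤ 1`, i.e.
`(1 - u) (1 - (β - 1) u) ≥ 0`. This holds for all `u ∈ (0, 1]` exactly when `β ≤ 2`; for
`β > 2` the point `u = β / (2 (β - 1))` violates it.
-/

open Matrix NormedSpace Set

theorem Matrix.inv_upperTriangular_fin_two {K : Type*} [Field K] {a d : K} (ha : a ≠ 0)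
    (hd : d ≠ 0) (b : K) : (!![a, b; 0, d])⁻¹ = !![a⁻¹, -b / (a * d); 0, d⁻¹] := by
  refine inv_eq_right_inv ?_
  simp [one_fin_two, ha, hd]
  field_simp
  ring

theorem Matrix.exp_upperTriangular_fin_two_s13 {𝕜 : Type*} [NormedField 𝕜] [NormedAlgebra ℚ 𝕜]
    [CompleteSpace 𝕜] (a c d : 𝕜) :
    exp !![a, c * (a - d); 0, d] = !![exp a, c * (exp a - exp d); 0, exp d] := by
  have hU : !![1, -c; 0, 1] * !![1, c; 0, 1] = (1 : Matrix (Fin 2) (Fin 2) 𝕜) := by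
    rw [mul_fin_two, one_fin_two]; simp
  have hconj : !![a, c * (a - d); 0, d] =
      !![1, -c; 0, 1] * diagonal ![a, d] * (!![1, -c; 0, 1])⁻¹ := by
    rw [inv_eq_right_inv hU, diagonal_vec2, mul_fin_two, mul_fin_two]
    simp
    ring
  rw [hconj, exp_conj _ _ ((isUnit_iff_isUnit_det _).2 (isUnit_det_of_right_inverse hU)),
    exp_diagonal, inv_eq_right_inv hU, diagonal_fin_two, mul_fin_two, mul_fin_two]
  simp
  ring

theorem Matrix.norm_toContinuousLinearMap_mulVecLin_fin_two {𝕜 : Type*}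
    [NontriviallyNormedField 𝕜] [NormedAlgebra ℝ 𝕜] [CompleteSpace 𝕜] (a b c d : 𝕜) :
    ‖LinearMap.toContinuousLinearMap (!![a, b; c, d].mulVecLin)‖ =
      max (‖a‖ + ‖b‖) (‖c‖ + ‖d‖) := by
  let _ := Matrix.linftyOpNormedAddCommGroup (m := Fin 2) (n := Fin 2) (α := 𝕜)
  have h : ‖LinearMap.toContinuousLinearMap (!![a, b; c, d].mulVecLin)‖ = ‖!![a, b; c, d]‖ :=
    congrArg NNReal.toReal (linfty_opNNNorm_eq_opNNNorm _).symm
  rw [h, linfty_opNorm_def, Fin.univ_succ, Finset.sup_cons]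
  simp

theorem forall_Ioc_sq_add_mul_sub_sq_le_one_iff {β : ℝ} :
    (∀ u ∈ Ioc (0 : ℝ) 1, u ^ 2 + β * (u - u ^ 2) ≤ 1) ↔ β ≤ 2 := by
  have factor (u : ℝ) : 1 - (u ^ 2 + β * (u - u ^ 2)) = (1 - u) * (1 - (β - 1) * u) := by ring
  constructor
  · intro h
    by_contra! hβ
    have hβ₁ : 0 < β - 1 := by linarith
    have hu : (β - 1) * (β / (2 * (β - 1))) = β / 2 := by field_simp
    have hu₁ : β / (2 * (β - 1)) < 1 := by rw [div_lt_one (by positivity)]; linarith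
    have := h _ ⟨by positivity, hu₁.le⟩
    nlinarith [factor (β / (2 * (β - 1)))]
  · rintro hβ u ⟨hu₀, hu₁⟩
    have : 0 ≤ 1 - (β - 1) * u := by nlinarith
    nlinarith [factor u, mul_nonneg (sub_nonneg.2 hu₁) this]

theorem forall_nonneg_exp_neg_half_iff {P : ℝ → Prop} :
    (∀ t : ℝ, 0 ≤ t → P (Real.exp (-(t / 2)))) ↔ ∀ u ∈ Ioc (0 : ℝ) 1, P u := by
  constructor
  · rintro h u ⟨hu₀, hu₁⟩
    have := h (-2 * Real.log u) (by nlinarith [Real.log_nonpos hu₀.le hu₁])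
    rwa [show -(-2 * Real.log u / 2) = Real.log u by ring, Real.exp_log hu₀] at this
  · intro h t ht
    exact h _ ⟨Real.exp_pos _, Real.exp_le_one_iff.2 (by linarith)⟩

theorem Matrix.norm_mulVecLin_upperTriangular_sq_le_one_iff {β u : ℝ} (hβ : 0 ≤ β)
    (hu₀ : 0 ≤ u) (hu₁ : u ≤ 1) :
    ‖LinearMap.toContinuousLinearMap
        (!![(u : ℂ) ^ 2, β * ((u : ℂ) ^ 2 - u); 0, (u : ℂ)].mulVecLin)‖ ≤ 1 ↔
      u ^ 2 + β * (u - u ^ 2) ≤ 1 := by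
  have hoff : ‖(β : ℂ) * ((u : ℂ) ^ 2 - u)‖ = β * (u - u ^ 2) := by
    rw [← Complex.ofReal_pow, ← Complex.ofReal_sub, ← Complex.ofReal_mul, Complex.norm_real,
      Real.norm_eq_abs, abs_of_nonpos (mul_nonpos_of_nonneg_of_nonpos hβ (by nlinarith)),
      neg_mul_eq_mul_neg, neg_sub]
  rw [Matrix.norm_toContinuousLinearMap_mulVecLin_fin_two, hoff, norm_pow, Complex.norm_real,
    Real.norm_of_nonneg hu₀, norm_zero, zero_add, max_le_iff, and_iff_left hu₁]

/-- For `A = [[-1, β],[0,-2]]` with `β > 0`: `A⁻¹ = [[-1, -β/2],[0, -1/2]]`,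
`e^{tA⁻¹} = [[e^{-t}, β(e^{-t} - e^{-t/2})],[0, e^{-t/2}]]`, and the semigroup
`(e^{tA⁻¹})_{t ≥ 0}` is contractive on `(ℂ², ‖·‖_∞)` if and only if `β ≤ 2`. -/
theorem stmt_13 (β : ℝ) (hβ : 0 < β) :
    (!![(-1 : ℂ), (β : ℂ); 0, -2])⁻¹ = !![(-1 : ℂ), -(β : ℂ) / 2; 0, -1 / 2] ∧
      (∀ t : ℝ, 0 ≤ t →
        NormedSpace.exp (t • !![(-1 : ℂ), -(β : ℂ) / 2; 0, -1 / 2]) =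
          !![Complex.exp (-t), (β : ℂ) * (Complex.exp (-t) - Complex.exp (-(t / 2)));
             0, Complex.exp (-(t / 2))]) ∧
      ((∀ t : ℝ, 0 ≤ t →
          ‖LinearMap.toContinuousLinearMap
            ((NormedSpace.exp (t • !![(-1 : ℂ), -(β : ℂ) / 2; 0, -1 / 2])).mulVecLin)‖ ≤ 1)
        ↔ β ≤ 2) := by
  have hexp (t : ℝ) : NormedSpace.exp (t • !![(-1 : ℂ), -(β : ℂ) / 2; 0, -1 / 2]) =
      !![Complex.exp (-t), (β : ℂ) * (Complex.exp (-t) - Complex.exp (-(t / 2)));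
         0, Complex.exp (-(t / 2))] := by
    have hsmul : t • !![(-1 : ℂ), -(β : ℂ) / 2; 0, -1 / 2] =
        !![-(t : ℂ), β * (-t - -(t / 2)); 0, -(t / 2)] := by
      ext i j
      fin_cases i <;> fin_cases j <;> simp [Complex.real_smul]
      all_goals ring
    rw [hsmul, exp_upperTriangular_fin_two_s13, ← Complex.exp_eq_exp_ℂ]
  have hexp_half (t : ℝ) : Complex.exp (-(t / 2)) = (Real.exp (-(t / 2)) : ℂ) := by
    push_cast; rfl
  have hexp_full (t : ℝ) : Complex.exp (-t) = (Real.exp (-(t / 2)) : ℂ) ^ 2 := by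
    rw [← hexp_half, ← Complex.exp_nat_mul]; push_cast; ring_nf
  refine ⟨by rw [inv_upperTriangular_fin_two (by norm_num) (by norm_num)]; norm_num,
    fun t _ => hexp t, ?_⟩
  calc (∀ t : ℝ, 0 ≤ t → ‖LinearMap.toContinuousLinearMap
          ((NormedSpace.exp (t • !![(-1 : ℂ), -(β : ℂ) / 2; 0, -1 / 2])).mulVecLin)‖ ≤ 1)
      ↔ ∀ t : ℝ, 0 ≤ t →
          Real.exp (-(t / 2)) ^ 2 + β * (Real.exp (-(t / 2)) - Real.exp (-(t / 2)) ^ 2) ≤ 1 :=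
        forall₂_congr fun t ht => by
          rw [hexp, hexp_full, hexp_half]
          exact norm_mulVecLin_upperTriangular_sq_le_one_iff hβ.le (Real.exp_pos _).le
            (Real.exp_le_one_iff.2 (by linarith))
    _ ↔ β ≤ 2 := forall_nonneg_exp_neg_half_iff.trans forall_Ioc_sq_add_mul_sub_sq_le_one_iff
end

section
/- (Carlson's inequality) For a measurable function f : (0,∞) → ℂ with f ∈ L²(0,∞) and t·f(t) ∈ L²(0,∞), both nonzero, one has ‖f‖_{L¹(0,∞)} ≤ 2 √(‖f‖_{L²} · ‖t f‖_{L²}). -/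
/-!
Split the integral at `c > 0`. On `(0, c]`, Cauchy–Schwarz against the constant `1` gives
`√c ‖f‖₂`; on `(c, ∞)`, writing `‖f t‖ = t⁻¹ · t ‖f t‖` gives `c^{-1/2} ‖t f‖₂`, since
`∫_c^∞ t⁻² dt = c⁻¹`. The choice `c = ‖t f‖₂ / ‖f‖₂` makes both terms equal to
`√(‖f‖₂ ‖t f‖₂)`.
-/

open MeasureTheory Set

section CauchySchwarz

variable {α : Type*} [MeasurableSpace α] {μ : Measure α} {p q : α → ℝ}

lemma memLp_two_sqrt (hp : Integrable p μ) (hp0 : 0 ≤ᵐ[μ] p) :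
    MemLp (fun x => √(p x)) 2 μ := by
  refine (memLp_two_iff_integrable_sq
    hp.aestronglyMeasurable.aemeasurable.sqrt.aestronglyMeasurable).2 (hp.congr ?_)
  filter_upwards [hp0] with x hx using (Real.sq_sqrt hx).symm

lemma integrable_sqrt_mul_sqrt (hp : Integrable p μ) (hq : Integrable q μ)
    (hp0 : 0 ≤ᵐ[μ] p) (hq0 : 0 ≤ᵐ[μ] q) :
    Integrable (fun x => √(p x) * √(q x)) μ :=
  (memLp_two_sqrt hp hp0).integrable_mul (memLp_two_sqrt hq hq0)

lemma integral_sqrt_mul_sqrt_le (hp : Integrable p μ) (hq : Integrable q μ)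
    (hp0 : 0 ≤ᵐ[μ] p) (hq0 : 0 ≤ᵐ[μ] q) :
    ∫ x, √(p x) * √(q x) ∂μ ≤ √(∫ x, p x ∂μ) * √(∫ x, q x ∂μ) := by
  have h := integral_mul_le_Lp_mul_Lq_of_nonneg Real.HolderConjugate.two_two
    (ae_of_all _ fun x => Real.sqrt_nonneg (p x)) (ae_of_all _ fun x => Real.sqrt_nonneg (q x))
    (by simpa using memLp_two_sqrt hp hp0) (by simpa using memLp_two_sqrt hq hq0)
  have sq_sqrt_ae {r : α → ℝ} (hr0 : 0 ≤ᵐ[μ] r) : ∫ x, √(r x) ^ (2 : ℝ) ∂μ = ∫ x, r x ∂μ := by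
    refine integral_congr_ae ?_
    filter_upwards [hr0] with x hx using by rw [Real.rpow_two, Real.sq_sqrt hx]
  rwa [sq_sqrt_ae hp0, sq_sqrt_ae hq0, ← Real.sqrt_eq_rpow, ← Real.sqrt_eq_rpow] at h

end CauchySchwarz

section Weighted

variable {α E : Type*} [MeasurableSpace α] [NormedAddCommGroup E] {μ : Measure α}
  {f : α → E} {w : α → ℝ}

lemma norm_eq_sqrt_inv_sq_mul_sqrt_sq_mul {y : E} {v : ℝ} (hv : v ≠ 0) :
    ‖y‖ = √((v ^ 2)⁻¹) * √(v ^ 2 * ‖y‖ ^ 2) := by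
  rw [← Real.sqrt_mul (by positivity), inv_mul_cancel_left₀ (pow_ne_zero 2 hv),
    Real.sqrt_sq (norm_nonneg y)]

lemma integrable_norm_of_weighted_sq (hw : ∀ᵐ x ∂μ, w x ≠ 0)
    (hw2 : Integrable (fun x => (w x ^ 2)⁻¹) μ)
    (hwf : Integrable (fun x => w x ^ 2 * ‖f x‖ ^ 2) μ) :
    Integrable (fun x => ‖f x‖) μ := by
  refine (integrable_sqrt_mul_sqrt hw2 hwf (ae_of_all _ fun _ => by positivity)
    (ae_of_all _ fun _ => by positivity)).congr ?_
  filter_upwards [hw] with x hx using (norm_eq_sqrt_inv_sq_mul_sqrt_sq_mul hx).symm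

lemma integral_norm_le_of_weighted_sq (hw : ∀ᵐ x ∂μ, w x ≠ 0)
    (hw2 : Integrable (fun x => (w x ^ 2)⁻¹) μ)
    (hwf : Integrable (fun x => w x ^ 2 * ‖f x‖ ^ 2) μ) :
    ∫ x, ‖f x‖ ∂μ ≤ √(∫ x, (w x ^ 2)⁻¹ ∂μ) * √(∫ x, w x ^ 2 * ‖f x‖ ^ 2 ∂μ) := by
  calc ∫ x, ‖f x‖ ∂μ = ∫ x, √((w x ^ 2)⁻¹) * √(w x ^ 2 * ‖f x‖ ^ 2) ∂μ := by
        refine integral_congr_ae ?_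
        filter_upwards [hw] with x hx using norm_eq_sqrt_inv_sq_mul_sqrt_sq_mul hx
    _ ≤ _ := integral_sqrt_mul_sqrt_le hw2 hwf (ae_of_all _ fun _ => by positivity)
        (ae_of_all _ fun _ => by positivity)

end Weighted

lemma integrableOn_Ioi_inv_sq {c : ℝ} (hc : 0 < c) :
    IntegrableOn (fun t : ℝ => (t ^ 2)⁻¹) (Ioi c) := by
  refine (integrableOn_Ioi_rpow_of_lt (by norm_num : (-2 : ℝ) < -1) hc).congr_fun
    (fun t ht => ?_) measurableSet_Ioi
  simp [Real.rpow_neg (hc.trans ht).le]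

lemma integral_Ioi_inv_sq {c : ℝ} (hc : 0 < c) : ∫ t in Ioi c, (t ^ 2)⁻¹ = c⁻¹ := by
  rw [setIntegral_congr_fun measurableSet_Ioi fun t ht => by
      rw [← Real.rpow_two, ← Real.rpow_neg (hc.trans ht).le],
    integral_Ioi_rpow_of_lt (by norm_num) hc]
  norm_num [Real.rpow_neg_one]

lemma sqrt_div_mul_add_div_sqrt_div {r s : ℝ} (hr : 0 < r) (hs : 0 < s) :
    √(r / s) * s + r / √(r / s) = 2 * √(s * r) := by
  have : 0 < √r := Real.sqrt_pos.2 hr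
  have : 0 < √s := Real.sqrt_pos.2 hs
  rw [Real.sqrt_div hr.le, Real.sqrt_mul hs.le]
  field_simp
  rw [Real.sq_sqrt hr.le, Real.sq_sqrt hs.le]
  ring

section HalfLine

variable {E : Type*} [NormedAddCommGroup E] {f : ℝ → E} {c : ℝ}

lemma integrableOn_norm_Ioc (hf2 : IntegrableOn (fun t => ‖f t‖ ^ 2) (Ioc 0 c)) :
    IntegrableOn (fun t => ‖f t‖) (Ioc 0 c) :=
  integrable_norm_of_weighted_sq (w := fun _ => 1) (ae_of_all _ fun _ => one_ne_zero)
    (by simp) (by simp only [one_pow, one_mul]; exact hf2)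

lemma integral_norm_Ioc_le (hc : 0 ≤ c) (hf2 : IntegrableOn (fun t => ‖f t‖ ^ 2) (Ioc 0 c)) :
    ∫ t in Ioc 0 c, ‖f t‖ ≤ √c * √(∫ t in Ioc 0 c, ‖f t‖ ^ 2) := by
  simpa [Real.volume_real_Ioc_of_le hc] using
    integral_norm_le_of_weighted_sq (μ := volume.restrict (Ioc 0 c)) (w := fun _ => 1)
      (ae_of_all _ fun _ => one_ne_zero) (by simp) (by simp only [one_pow, one_mul]; exact hf2)

lemma ae_restrict_Ioi_ne_zero (hc : 0 < c) : ∀ᵐ t ∂volume.restrict (Ioi c), t ≠ 0 :=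
  ae_restrict_of_forall_mem measurableSet_Ioi fun _ ht => (hc.trans ht).ne'

lemma integrableOn_norm_Ioi (hc : 0 < c)
    (htf2 : IntegrableOn (fun t => t ^ 2 * ‖f t‖ ^ 2) (Ioi c)) :
    IntegrableOn (fun t => ‖f t‖) (Ioi c) :=
  integrable_norm_of_weighted_sq (ae_restrict_Ioi_ne_zero hc) (integrableOn_Ioi_inv_sq hc) htf2

lemma integral_norm_Ioi_le (hc : 0 < c)
    (htf2 : IntegrableOn (fun t => t ^ 2 * ‖f t‖ ^ 2) (Ioi c)) :
    ∫ t in Ioi c, ‖f t‖ ≤ √(∫ t in Ioi c, t ^ 2 * ‖f t‖ ^ 2) / √c := by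
  have h := integral_norm_le_of_weighted_sq (ae_restrict_Ioi_ne_zero hc)
    (integrableOn_Ioi_inv_sq hc) htf2
  rwa [integral_Ioi_inv_sq hc, Real.sqrt_inv, inv_mul_eq_div] at h

lemma integral_norm_Ioi_zero_le (hc : 0 < c)
    (hf2 : IntegrableOn (fun t => ‖f t‖ ^ 2) (Ioi 0))
    (htf2 : IntegrableOn (fun t => t ^ 2 * ‖f t‖ ^ 2) (Ioi 0)) :
    ∫ t in Ioi 0, ‖f t‖ ≤
      √c * √(∫ t in Ioi 0, ‖f t‖ ^ 2) + √(∫ t in Ioi 0, t ^ 2 * ‖f t‖ ^ 2) / √c := by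
  have hf2_near := hf2.mono_set (Ioc_subset_Ioi_self : Ioc 0 c ⊆ _)
  have htf2_far := htf2.mono_set (Ioi_subset_Ioi hc.le)
  have h_near : ∫ t in Ioc 0 c, ‖f t‖ ^ 2 ≤ ∫ t in Ioi 0, ‖f t‖ ^ 2 :=
    setIntegral_mono_set hf2 (ae_of_all _ fun _ => by positivity)
      Ioc_subset_Ioi_self.eventuallyLE
  have h_far : ∫ t in Ioi c, t ^ 2 * ‖f t‖ ^ 2 ≤ ∫ t in Ioi 0, t ^ 2 * ‖f t‖ ^ 2 :=
    setIntegral_mono_set htf2 (ae_of_all _ fun _ => by positivity)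
      (Ioi_subset_Ioi hc.le).eventuallyLE
  calc ∫ t in Ioi 0, ‖f t‖ = (∫ t in Ioc 0 c, ‖f t‖) + ∫ t in Ioi c, ‖f t‖ := by
        rw [← setIntegral_union (Ioc_disjoint_Ioi le_rfl) measurableSet_Ioi
          (integrableOn_norm_Ioc hf2_near) (integrableOn_norm_Ioi hc htf2_far),
          Ioc_union_Ioi_eq_Ioi hc.le]
    _ ≤ √c * √(∫ t in Ioc 0 c, ‖f t‖ ^ 2) + √(∫ t in Ioi c, t ^ 2 * ‖f t‖ ^ 2) / √c :=
        add_le_add (integral_norm_Ioc_le hc.le hf2_near) (integral_norm_Ioi_le hc htf2_far)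
    _ ≤ _ := by gcongr

end HalfLine

theorem stmt_14_general (f : ℝ → ℂ)
    (hf2 : IntegrableOn (fun t => ‖f t‖ ^ 2) (Set.Ioi 0))
    (htf2 : IntegrableOn (fun t => t ^ 2 * ‖f t‖ ^ 2) (Set.Ioi 0))
    (h1 : (∫ t in Set.Ioi (0 : ℝ), ‖f t‖ ^ 2) ≠ 0)
    (h2 : (∫ t in Set.Ioi (0 : ℝ), t ^ 2 * ‖f t‖ ^ 2) ≠ 0) :
    (∫ t in Set.Ioi (0 : ℝ), ‖f t‖) ≤
      2 * Real.sqrt ((∫ t in Set.Ioi (0 : ℝ), ‖f t‖ ^ 2) ^ ((1 : ℝ) / 2) *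
        (∫ t in Set.Ioi (0 : ℝ), t ^ 2 * ‖f t‖ ^ 2) ^ ((1 : ℝ) / 2)) := by
  set a := ∫ t in Ioi (0 : ℝ), ‖f t‖ ^ 2
  set b := ∫ t in Ioi (0 : ℝ), t ^ 2 * ‖f t‖ ^ 2
  have ha : 0 < a := (integral_nonneg fun _ => by positivity).lt_of_ne' h1
  have hb : 0 < b := (integral_nonneg fun _ => by positivity).lt_of_ne' h2
  calc ∫ t in Ioi 0, ‖f t‖ ≤ √(√b / √a) * √a + √b / √(√b / √a) :=
        integral_norm_Ioi_zero_le (by positivity) hf2 htf2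
    _ = _ := by
        rw [sqrt_div_mul_add_div_sqrt_div (by positivity) (by positivity), Real.sqrt_eq_rpow a,
          Real.sqrt_eq_rpow b]

/-- Carlson's inequality: for measurable `f : (0,∞) → ℂ` with `f ∈ L²(0,∞)` and
`t f(t) ∈ L²(0,∞)`, both nonzero, one has
`‖f‖_{L¹} ≤ 2 √(‖f‖_{L²} · ‖t f‖_{L²})`. -/
theorem stmt_14 (f : ℝ → ℂ)
    (hmeas : AEStronglyMeasurable f (volume.restrict (Set.Ioi 0)))
    (hf2 : IntegrableOn (fun t => ‖f t‖ ^ 2) (Set.Ioi 0))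
    (htf2 : IntegrableOn (fun t => t ^ 2 * ‖f t‖ ^ 2) (Set.Ioi 0))
    (h1 : (∫ t in Set.Ioi (0 : ℝ), ‖f t‖ ^ 2) ≠ 0)
    (h2 : (∫ t in Set.Ioi (0 : ℝ), t ^ 2 * ‖f t‖ ^ 2) ≠ 0) :
    (∫ t in Set.Ioi (0 : ℝ), ‖f t‖) ≤
      2 * Real.sqrt ((∫ t in Set.Ioi (0 : ℝ), ‖f t‖ ^ 2) ^ ((1 : ℝ) / 2) *
        (∫ t in Set.Ioi (0 : ℝ), t ^ 2 * ‖f t‖ ^ 2) ^ ((1 : ℝ) / 2)) :=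
  stmt_14_general f hf2 htf2 h1 h2
end

section
/- Let L¹_n denote the first generalized Laguerre polynomial, L¹_n(t) = Σ_{m=0}^n ((-1)^m/m!) · C(n+1, n-m) · t^m. Then the Laplace transform of the function t ↦ -2 L¹_{n-1}(2t) e^{-t} equals s ↦ ((s-1)/(s+1))ⁿ - 1 for Re s > -1 (for n ≥ 1). -/
/-!
Multiplying out, the integrand is `∑ₘ cₘ tᵐ e^{-(s+1)t}`, and the moments
`∫₀^∞ tᵐ e^{-at} dt = m!/a^{m+1}` (`Re a > 0`, integration by parts) cancel the `m!` of the
Laguerre coefficients. By `C(n+1, n-m) = C(n+1, m+1)` what remains is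
`∑ₘ C(n+1, m+1) (-2/(s+1))^{m+1} = (1 - 2/(s+1))^{n+1} - 1`, and `1 - 2/(s+1) = (s-1)/(s+1)`.
-/

/-- The first generalised Laguerre polynomial
`L¹_n(t) = ∑_{m=0}^n ((-1)^m/m!) C(n+1, n-m) t^m`. -/
noncomputable def laguerre1 (n : ℕ) (t : ℝ) : ℝ :=
  ∑ m ∈ Finset.range (n + 1),
    (-1 : ℝ) ^ m / (Nat.factorial m) * ((n + 1).choose (n - m)) * t ^ m

open MeasureTheory Set Filter Asymptotics Topology

lemma norm_pow_mul_cexp_neg_mul (m : ℕ) (a : ℂ) {t : ℝ} (ht : 0 ≤ t) :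
    ‖(t : ℂ) ^ m * Complex.exp (-a * t)‖ = t ^ m * Real.exp (-a.re * t) := by
  simp [Complex.norm_exp, abs_of_nonneg ht]

lemma tendsto_pow_mul_cexp_neg_mul_atTop (m : ℕ) {a : ℂ} (ha : 0 < a.re) :
    Tendsto (fun t : ℝ => (t : ℂ) ^ m * Complex.exp (-a * t)) atTop (𝓝 0) := by
  rw [tendsto_zero_iff_norm_tendsto_zero]
  refine (tendsto_rpow_mul_exp_neg_mul_atTop_nhds_zero m a.re ha).congr' ?_
  filter_upwards [eventually_ge_atTop 0] with t ht
  rw [norm_pow_mul_cexp_neg_mul m a ht, Real.rpow_natCast]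

lemma integrableOn_pow_mul_exp_neg_mul (m : ℕ) {b : ℝ} (hb : 0 < b) :
    IntegrableOn (fun t : ℝ => t ^ m * Real.exp (-b * t)) (Ioi 0) := by
  refine integrable_of_isBigO_exp_neg (half_pos hb) (by fun_prop) ?_
  -- `tᵐ e^{-bt} = (tᵐ e^{-bt/2}) e^{-bt/2}`, and the first factor tends to `0`.
  have hbound :=
    (tendsto_rpow_mul_exp_neg_mul_atTop_nhds_zero m (b / 2) (half_pos hb)).isBigO_one ℝ
  refine (hbound.mul (isBigO_refl (fun t : ℝ => Real.exp (-(b / 2) * t)) atTop)).congr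
    (fun t => ?_) (fun t => one_mul _)
  rw [Real.rpow_natCast, mul_assoc, ← Real.exp_add]
  ring_nf

lemma integrableOn_pow_mul_cexp_neg_mul (m : ℕ) {a : ℂ} (ha : 0 < a.re) :
    IntegrableOn (fun t : ℝ => (t : ℂ) ^ m * Complex.exp (-a * t)) (Ioi 0) := by
  refine (integrableOn_pow_mul_exp_neg_mul m ha).mono' (by fun_prop) ?_
  filter_upwards [ae_restrict_mem measurableSet_Ioi] with t ht
  exact (norm_pow_mul_cexp_neg_mul m a (le_of_lt ht)).le

lemma hasDerivAt_pow_succ_mul_cexp_neg_mul (k : ℕ) (a : ℂ) (x : ℝ) :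
    HasDerivAt (fun t : ℝ => (t : ℂ) ^ (k + 1) * Complex.exp (-a * t))
      ((k + 1) * ((x : ℂ) ^ k * Complex.exp (-a * x))
        - a * ((x : ℂ) ^ (k + 1) * Complex.exp (-a * x))) x := by
  have hpow := (hasDerivAt_pow (k + 1) (x : ℂ)).comp_ofReal
  have hexp := (((hasDerivAt_id (x : ℂ)).const_mul (-a)).cexp).comp_ofReal
  refine (hpow.mul hexp).congr_deriv ?_
  simp only [Nat.cast_add, Nat.cast_one, add_tsub_cancel_right, id]
  ring

lemma integral_pow_mul_cexp_neg_mul (m : ℕ) {a : ℂ} (ha : 0 < a.re) :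
    ∫ t in Ioi (0 : ℝ), (t : ℂ) ^ m * Complex.exp (-a * t) = m.factorial / a ^ (m + 1) := by
  have ha0 : a ≠ 0 := fun h => by simp [h] at ha
  induction m with
  | zero =>
    have h := integral_exp_mul_complex_Ioi (a := -a) (by simpa using ha) 0
    simp only [pow_zero, one_mul, h]
    field_simp
    simp
  | succ k ih =>
    have hparts := integral_Ioi_of_hasDerivAt_of_tendsto'
      (fun x _ => hasDerivAt_pow_succ_mul_cexp_neg_mul k a x)
      (((integrableOn_pow_mul_cexp_neg_mul k ha).const_mul _).sub
        ((integrableOn_pow_mul_cexp_neg_mul (k + 1) ha).const_mul _))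
      (tendsto_pow_mul_cexp_neg_mul_atTop (k + 1) ha)
    rw [integral_sub ((integrableOn_pow_mul_cexp_neg_mul k ha).const_mul _)
        ((integrableOn_pow_mul_cexp_neg_mul (k + 1) ha).const_mul _),
      integral_const_mul, integral_const_mul, ih] at hparts
    simp only [Complex.ofReal_zero, zero_pow k.succ_ne_zero, zero_mul, sub_zero] at hparts
    rw [Nat.factorial_succ, eq_div_iff (pow_ne_zero _ ha0)]
    push_cast
    generalize ∫ t in Ioi (0 : ℝ), (t : ℂ) ^ (k + 1) * Complex.exp (-a * t) = I at hparts ⊢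
    field_simp at hparts
    linear_combination -hparts

lemma integral_sum_mul_pow_mul_cexp_neg_mul (N : ℕ) (c : ℕ → ℂ) {a : ℂ} (ha : 0 < a.re) :
    ∫ t in Ioi (0 : ℝ), ∑ m ∈ Finset.range N, c m * ((t : ℂ) ^ m * Complex.exp (-a * t)) =
      ∑ m ∈ Finset.range N, c m * (m.factorial / a ^ (m + 1)) := by
  rw [integral_finsetSum _ fun m _ => (integrableOn_pow_mul_cexp_neg_mul m ha).const_mul (c m)]
  simp_rw [integral_const_mul, integral_pow_mul_cexp_neg_mul _ ha]

lemma sum_range_choose_succ_mul_pow_succ {R : Type*} [CommRing R] (n : ℕ) (x : R) :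
    ∑ m ∈ Finset.range (n + 1), ((n + 1).choose (m + 1) : R) * x ^ (m + 1) =
      (1 + x) ^ (n + 1) - 1 := by
  rw [eq_sub_iff_add_eq, add_comm 1 x, add_pow, Finset.sum_range_succ' _ (n + 1)]
  simp [mul_comm]

lemma ofReal_laguerre1 (n : ℕ) (t : ℝ) :
    (laguerre1 n t : ℂ) = ∑ m ∈ Finset.range (n + 1),
      (-1 : ℂ) ^ m / m.factorial * ((n + 1).choose (n - m)) * (t : ℂ) ^ m := by
  simp [laguerre1]

lemma laplace_laguerre1 (n : ℕ) {s : ℂ} (hs : -1 < s.re) :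
    (∫ t in Ioi (0 : ℝ),
        Complex.exp (-s * t) * (-2 * (laguerre1 n (2 * t) : ℝ) * Real.exp (-t))) =
      ((s - 1) / (s + 1)) ^ (n + 1) - 1 := by
  have ha : 0 < (s + 1).re := by simp only [Complex.add_re, Complex.one_re]; linarith
  have ha0 : s + 1 ≠ 0 := fun h => by simp [h] at ha
  have hintegrand (t : ℝ) :
      Complex.exp (-s * t) * (-2 * (laguerre1 n (2 * t) : ℝ) * Real.exp (-t)) =
        ∑ m ∈ Finset.range (n + 1), -2 * ((-1 : ℂ) ^ m / m.factorial * ((n + 1).choose (n - m))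
          * 2 ^ m) * ((t : ℂ) ^ m * Complex.exp (-(s + 1) * t)) := by
    rw [ofReal_laguerre1, Complex.ofReal_exp, Finset.mul_sum, Finset.sum_mul, Finset.mul_sum]
    refine Finset.sum_congr rfl fun m _ => ?_
    rw [show -(s + 1) * t = -s * t + (-t : ℝ) by push_cast; ring, Complex.exp_add]
    push_cast
    ring
  have hcoeff : ∀ m ∈ Finset.range (n + 1),
      -2 * ((-1 : ℂ) ^ m / m.factorial * ((n + 1).choose (n - m)) * 2 ^ m)
          * (m.factorial / (s + 1) ^ (m + 1)) =
        ((n + 1).choose (m + 1) : ℂ) * (-2 / (s + 1)) ^ (m + 1) := by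
    intro m hm
    rw [Nat.choose_symm_of_eq_add (by grind : n + 1 = (n - m) + (m + 1)), div_pow, neg_pow (2 : ℂ)]
    have := Nat.cast_ne_zero (R := ℂ).mpr m.factorial_ne_zero
    field_simp
    ring
  simp_rw [hintegrand]
  rw [integral_sum_mul_pow_mul_cexp_neg_mul _ _ ha, Finset.sum_congr rfl hcoeff,
    sum_range_choose_succ_mul_pow_succ]
  congr 2
  field_simp
  ring

/-- For `n ≥ 1`, the Laplace transform of `t ↦ -2 L¹_{n-1}(2t) e^{-t}` is
`s ↦ ((s-1)/(s+1))ⁿ - 1` for `Re s > -1`. -/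
theorem stmt_18 (n : ℕ) (hn : 1 ≤ n) (s : ℂ) (hs : -1 < s.re) :
    (∫ t in Set.Ioi (0 : ℝ),
        Complex.exp (-s * t) * (-2 * (laguerre1 (n - 1) (2 * t) : ℝ) * Real.exp (-t))) =
      ((s - 1) / (s + 1)) ^ n - 1 := by
  obtain ⟨k, rfl⟩ := Nat.exists_eq_add_of_le' hn
  exact laplace_laguerre1 k hs
end
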